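/- Let s ≥ 0 and N a positive integer. The sequence b : ℤ² → ℝ≥0 defined by b(q) = N^{−3/2}·#Γ(q) for q ∈ ℤ^{2,d}_{3N} and 0 otherwise, where Γ(q) = {(k1,k2,k3) ∈ (ℤ_N^{2,d})³ : k1 − k2 + k3 = q}, satisfies ∑_{q : |q1| ≤ N/2, q diagonal} (1+|q|²)^s b(q)² ≥ c N^{2(1+s)} for an absolute constant c > 0 (depending on s). -/

import Mathlib

open Finset

/-- The diagonal segment `ℤ_N^{2,d} = {(k,k) : |k| ≤ N}` as a finset. -/
noncomputable def diagSet (N : ℕ) : Finset (ℤ × ℤ) := (Finset.Icc (-(N:ℤ)) N).image (fun k => (k, k))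

/-- Number of triples `(k1,k2,k3) ∈ (ℤ_N^{2,d})³` with `k1 − k2 + k3 = q`. -/
noncomputable def Gam (N : ℕ) (q : ℤ × ℤ) : ℕ :=
  ((diagSet N ×ˢ diagSet N ×ˢ diagSet N).filter
    (fun k => k.1 - k.2.1 + k.2.2 = q)).card

/-!
On the diagonal the constraint `k₁ - k₂ + k₃ = q` only fixes `k₂ = k₁ + k₃ - q`, so every pair
`(k₁, k₃)` with `|k₁|, |k₃| ≤ N/4` contributes to `Γ(q)` as soon as `|q| ≤ N/2`, giving
`#Γ(q) ≳ N²`, i.e. `b(q) ≳ N^{1/2}`. Summing `(1 + 2q²)^s b(q)² ≳ N^{2s} · N` over the `≳ N`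
diagonal points with `N/4 ≤ q ≤ N/2` gives `N^{2(1+s)}`.
-/

lemma mem_diagSet_iff {N : ℕ} {k : ℤ} : (k, k) ∈ diagSet N ↔ |k| ≤ N := by
  simp [diagSet, abs_le]

lemma two_mul_add_one_sq_le_Gam {N M : ℕ} {q : ℤ} (h : 2 * M + |q| ≤ N) :
    (2 * M + 1) ^ 2 ≤ Gam N (q, q) := by
  have hcard : #(Icc (-(M : ℤ)) M ×ˢ Icc (-(M : ℤ)) M) = (2 * M + 1) ^ 2 := by
    rw [card_product, Int.card_Icc, sq]
    congr 1 <;> omega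
  rw [← hcard, Gam]
  refine card_le_card_of_injOn (fun a => ((a.1, a.1), (a.1 + a.2 - q, a.1 + a.2 - q), (a.2, a.2)))
    ?_ ?_
  · rintro ⟨k₁, k₃⟩ hk
    simp only [coe_product, coe_Icc, Set.mem_prod, Set.mem_Icc] at hk
    simp only [coe_filter, mem_product, mem_diagSet_iff, Set.mem_ofPred_eq, Prod.ext_iff,
      Prod.fst_sub, Prod.snd_sub, Prod.fst_add, Prod.snd_add]
    have hq_lo := neg_abs_le q
    have hq_hi := le_abs_self q
    refine ⟨⟨?_, ?_, ?_⟩, by ring, by ring⟩ <;> rw [abs_le] <;> omega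
  · rintro ⟨a₁, a₃⟩ _ ⟨b₁, b₃⟩ _ hab
    simp only [Prod.mk.injEq] at hab
    exact Prod.ext hab.1.1 hab.2.2.1

lemma rpow_neg_three_halves_mul_sq {x : ℝ} (hx : 0 < x) (y : ℝ) :
    (x ^ (-(3 : ℝ) / 2) * y) ^ 2 = y ^ 2 / x ^ 3 := by
  have h : (x ^ (-(3 : ℝ) / 2)) ^ 2 = (x ^ 3)⁻¹ := by
    rw [← Real.rpow_natCast, ← Real.rpow_mul hx.le,
      show -(3 : ℝ) / 2 * (2 : ℕ) = -(3 : ℕ) by norm_num, Real.rpow_neg hx.le, Real.rpow_natCast]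
  rw [mul_pow, h, div_eq_mul_inv, mul_comm]

section

variable {N : ℕ} {q : ℤ}

lemma sq_div_le_one_add_two_sq (hq : ((N / 4 : ℕ) : ℤ) ≤ q) :
    (N : ℝ) ^ 2 / 32 ≤ 1 + 2 * (q : ℝ) ^ 2 := by
  have hNq : (N : ℝ) ≤ 4 * q + 4 := by exact_mod_cast (by omega : (N : ℤ) ≤ 4 * q + 4)
  have hq₀ : (0 : ℝ) ≤ q := by exact_mod_cast (by omega : (0 : ℤ) ≤ q)
  nlinarith [sq_nonneg ((q : ℝ) - 1)]

lemma div_four_sq_le_Gam (hq : q ∈ Icc ((N / 4 : ℕ) : ℤ) (2 * (N / 4 : ℕ))) :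
    ((N : ℝ) / 4) ^ 2 ≤ Gam N (q, q) := by
  rw [mem_Icc] at hq
  have hGam := two_mul_add_one_sq_le_Gam (N := N) (M := N / 4) (q := q)
    (by rw [abs_of_nonneg (by omega)]; omega)
  have hN : (N : ℝ) / 4 ≤ (2 * (N / 4 : ℕ) + 1 : ℕ) := by
    rw [div_le_iff₀ (by norm_num)]
    exact_mod_cast (by omega : N ≤ (2 * (N / 4) + 1) * 4)
  calc ((N : ℝ) / 4) ^ 2 ≤ ((2 * (N / 4 : ℕ) + 1 : ℕ) : ℝ) ^ 2 := by gcongr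
    _ ≤ (Gam N (q, q) : ℝ) := by exact_mod_cast hGam

lemma summand_lower_bound {s : ℝ} (hs : 0 ≤ s) (hN : 0 < N)
    (hq : q ∈ Icc ((N / 4 : ℕ) : ℤ) (2 * (N / 4 : ℕ))) :
    ((N : ℝ) ^ 2 / 32) ^ s * (N / 256) ≤
      (1 + 2 * (q : ℝ) ^ 2) ^ s * ((N : ℝ) ^ (-(3 : ℝ) / 2) * (Gam N (q, q) : ℝ)) ^ 2 := by
  have hN : (0 : ℝ) < N := by exact_mod_cast hN
  have hN' : (N : ℝ) / 256 = (((N : ℝ) / 4) ^ 2) ^ 2 / (N : ℝ) ^ 3 := by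
    field_simp
    ring
  rw [rpow_neg_three_halves_mul_sq hN, hN']
  gcongr
  · exact sq_div_le_one_add_two_sq (mem_Icc.mp hq).1
  · exact div_four_sq_le_Gam hq

end

/-- Fourier-side lower bound for the first Picard iterate: for `s ≥ 0` there is
`c > 0` with `∑_{diagonal q, |q1| ≤ N/2} (1+|q|²)^s (N^{−3/2} #Γ(q))² ≥ c N^{2(1+s)}`. -/
theorem stmt_18 (s : ℝ) (hs : 0 ≤ s) :
    ∃ c : ℝ, 0 < c ∧ ∀ N : ℕ, 0 < N →
      c * (N : ℝ) ^ (2 * (1 + s)) ≤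
      ∑ q1 ∈ (Finset.Icc (-(3 * N : ℤ)) (3 * N)).filter (fun q1 => 2 * |q1| ≤ (N : ℤ)),
        (1 + 2 * (q1 : ℝ) ^ 2) ^ s * ((N : ℝ) ^ (-(3:ℝ)/2) * (Gam N (q1, q1) : ℝ)) ^ 2 := by
  refine ⟨1 / (1024 * 32 ^ s), by positivity, fun N hN => ?_⟩
  have hNR : (0 : ℝ) < N := by exact_mod_cast hN
  set T := Icc ((N / 4 : ℕ) : ℤ) (2 * (N / 4 : ℕ))
  have hT : T ⊆ (Icc (-(3 * N : ℤ)) (3 * N)).filter (fun q1 => 2 * |q1| ≤ (N : ℤ)) := by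
    intro q hq
    rw [mem_Icc] at hq
    rw [mem_filter, mem_Icc, abs_of_nonneg (by omega)]
    omega
  have hcardT : (N : ℝ) / 4 ≤ #T := by
    rw [Int.card_Icc, div_le_iff₀ (by norm_num)]
    exact_mod_cast (by omega : (N : ℤ) ≤ (2 * (N / 4 : ℕ) + 1 - (N / 4 : ℕ) : ℤ).toNat * 4)
  calc 1 / (1024 * 32 ^ s) * (N : ℝ) ^ (2 * (1 + s))
      = (N / 4) * (((N : ℝ) ^ 2 / 32) ^ s * (N / 256)) := by
        rw [Real.div_rpow (by positivity) (by norm_num), mul_comm 2, Real.rpow_mul hNR.le,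
          Real.rpow_add hNR, Real.rpow_one, Real.rpow_two, mul_pow, Real.rpow_pow_comm hNR.le]
        field_simp
        ring
    _ ≤ #T * (((N : ℝ) ^ 2 / 32) ^ s * (N / 256)) := by gcongr
    _ ≤ ∑ q ∈ T, (1 + 2 * (q : ℝ) ^ 2) ^ s * ((N : ℝ) ^ (-(3:ℝ)/2) * (Gam N (q, q) : ℝ)) ^ 2 := by
        rw [← nsmul_eq_mul]
        exact card_nsmul_le_sum T _ _ fun q hq => summand_lower_bound hs hN hq
    _ ≤ _ := sum_le_sum_of_subset_of_nonneg hT fun _ _ _ => by positivity
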